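/- Let κ be a cardinal of countable cofinality and let ⟨κ_n : n < ω⟩ be a strictly increasing sequence of regular cardinals cofinal in κ. Then there exists a sequence ⟨f_α : α < κ⁺⟩ of functions in ∏_{n<ω}(κ_{n+1} \ κ_n) that is strictly increasing modulo finite, i.e., for all α < β < κ⁺ we have f_α(n) < f_β(n) for all but finitely many n. -/

import Mathlib

/-!
A family of at most `κ = ⨆ κₙ` functions splits into pieces `Sₙ` with `|Sₙ| ≤ κₙ` such that
every member lies in `Sₙ` for all large `n`. Then `g n = sup {f n + 1 | f ∈ Sₙ}` stays below
`κₙ₊₁` by regularity and dominates every member of the family modulo finite. Since every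
`α < κ⁺` has at most `κ` predecessors, a transfinite recursion of length `κ⁺` choosing such a
bound at each stage produces the sequence.
-/

open Cardinal Ordinal Set Filter

universe u v

theorem exists_rel_seq_of_forall_exists_bound {ι X : Type*} [Preorder ι] [WellFoundedLT ι]
    [Nonempty X] (s : Set X) (r : X → X → Prop) (o : ι)
    (h : ∀ α < o, ∀ f : ι → X, (∀ β < α, f β ∈ s) → ∃ x ∈ s, ∀ β < α, r (f β) x) :
    ∃ f : ι → X, (∀ α < o, f α ∈ s) ∧ ∀ α β, α < β → β < o → r (f α) (f β) := by
  let F : ι → X := wellFounded_lt.fix fun β IH =>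
    Classical.epsilon fun x => x ∈ s ∧ ∀ α (hα : α < β), r (IH α hα) x
  have hF (β) : F β = Classical.epsilon fun x => x ∈ s ∧ ∀ α < β, r (F α) x :=
    wellFounded_lt.fix_eq _ β
  have key (β) : β < o → F β ∈ s ∧ ∀ α < β, r (F α) (F β) := by
    induction β using WellFoundedLT.induction with
    | _ β IH =>
      intro hβ
      rw [hF]
      exact Classical.epsilon_spec (h β hβ F fun α hα => (IH α hα (hα.trans hβ)).1)
  exact ⟨F, fun β hβ => (key β hβ).1, fun α β hαβ hβ => (key β hβ).2 α hαβ⟩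

theorem exists_eventually_mem_of_lift_mk_le_iSup {T : Type v} {κs : ℕ → Cardinal.{u}}
    (hmono : Monotone κs) (hT : lift.{u} #T ≤ lift.{v} (⨆ n, κs n)) :
    ∃ A : ℕ → Set T, (∀ n, lift.{u} #(A n) ≤ lift.{v} (κs n)) ∧
      ∀ t, ∀ᶠ n in atTop, t ∈ A n := by
  obtain ⟨e⟩ : Nonempty (T ↪ Iio (⨆ n, κs n).ord) := by
    rw [← lift_mk_le', Cardinal.mk_Iio_ordinal, card_ord]
    simpa using Cardinal.lift_le.{u + 1}.2 hT
  refine ⟨fun n => {t | (e t).1 < (κs n).ord}, fun n => ?_, fun t => ?_⟩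
  · have hinj : Function.Injective fun t : {t | (e t).1 < (κs n).ord} =>
        (⟨e t, t.2⟩ : Iio (κs n).ord) :=
      fun s t hst => Subtype.ext <| e.injective <| Subtype.ext <|
        congrArg (fun x : Iio (κs n).ord => x.1) hst
    have := lift_mk_le_lift_mk_of_injective hinj
    rw [Cardinal.mk_Iio_ordinal, card_ord] at this
    rw [← Cardinal.lift_le.{u + 1}]
    simpa using this
  · obtain ⟨m, hm⟩ : ∃ m, (e t).1.card < κs m :=
      (lt_ciSup_iff Cardinal.bddAbove_of_small).1 (lt_ord.1 (e t).2)
    exact eventually_atTop.2 ⟨m, fun n hn => lt_ord.2 (hm.trans_le (hmono hn))⟩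

/-- The product `∏ₙ (κₙ₊₁ \ κₙ)`, with cardinals read as initial ordinals. -/
def intervalProduct (κs : ℕ → Cardinal.{u}) : Set (ℕ → Ordinal.{u}) :=
  {f | ∀ n, f n ∈ Ico (κs n).ord (κs (n + 1)).ord}

theorem exists_mem_intervalProduct_eventually_lt {κs : ℕ → Cardinal.{u}}
    (hmono : StrictMono κs) (hreg : ∀ n, (κs (n + 1)).IsRegular)
    (S : Set (ℕ → Ordinal.{u})) (hS : S ⊆ intervalProduct κs)
    (hcard : #S ≤ lift.{u + 1} (⨆ n, κs n)) :
    ∃ g ∈ intervalProduct κs, ∀ f ∈ S, ∀ᶠ n in atTop, f n < g n := by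
  obtain ⟨A, hA, hmem⟩ := exists_eventually_mem_of_lift_mk_le_iSup (T := S) hmono.monotone
    (by rwa [Cardinal.lift_id'.{u, u + 1}])
  have hlt (n : ℕ) (f : S) : f.1 n < (κs (n + 1)).ord := (hS f.2 n).2
  have hbound (n : ℕ) : ⨆ f : A n, f.1.1 n + 1 < (κs (n + 1)).ord := by
    refine lift_iSup_add_one_lt_of_lt_cof ?_ fun f => hlt n f.1
    calc lift.{u} #(A n) ≤ lift.{u + 1} (κs n) := hA n
      _ < lift.{u + 1} (κs (n + 1)) := Cardinal.lift_lt.2 (hmono n.lt_succ_self)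
      _ = (Ordinal.lift.{u + 1} (κs (n + 1)).ord).cof := by rw [← lift_cof, (hreg n).cof_ord]
  refine ⟨fun n => (κs n).ord ⊔ ⨆ f : A n, f.1.1 n + 1, fun n => ?_, fun f hf => ?_⟩
  · exact ⟨le_sup_left, max_lt (ord_lt_ord.2 (hmono n.lt_succ_self)) (hbound n)⟩
  · filter_upwards [hmem ⟨f, hf⟩] with n hn
    have hbdd : BddAbove (range fun f : A n => f.1.1 n + 1) :=
      ⟨_, forall_mem_range.2 fun f => Order.add_one_le_of_lt (hlt n f.1)⟩
    calc f n < f n + 1 := lt_add_one _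
      _ ≤ ⨆ f : A n, f.1.1 n + 1 := le_ciSup hbdd ⟨⟨f, hf⟩, hn⟩
      _ ≤ _ := le_sup_right

theorem stmt1_general (κ : Cardinal.{u})
    (κs : ℕ → Cardinal.{u}) (hmono : StrictMono κs)
    (hreg : ∀ n, (κs n).IsRegular) (hcof : (⨆ n, κs n) = κ) :
    ∃ f : Ordinal.{u} → ℕ → Ordinal.{u},
      (∀ α < (Order.succ κ).ord, ∀ n,
          (κs n).ord ≤ f α n ∧ f α n < (κs (n + 1)).ord) ∧
      (∀ α β, α < β → β < (Order.succ κ).ord →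
          ∀ᶠ n in Filter.atTop, f α n < f β n) := by
  refine exists_rel_seq_of_forall_exists_bound (intervalProduct κs)
    (fun f g => ∀ᶠ n in atTop, f n < g n) (Order.succ κ).ord fun α hα f hf => ?_
  have hcard : #(f '' Iio α) ≤ lift.{u + 1} (⨆ n, κs n) := by
    refine mk_image_le.trans ?_
    rw [Cardinal.mk_Iio_ordinal, Cardinal.lift_le, hcof]
    exact card_le_iff.2 hα
  obtain ⟨g, hg, hdom⟩ := exists_mem_intervalProduct_eventually_lt hmono (fun n => hreg (n + 1))
    (f '' Iio α) (image_subset_iff.2 hf) hcard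
  exact ⟨g, hg, fun β hβ => hdom _ (mem_image_of_mem f hβ)⟩

/-- If κ has countable cofinality, witnessed by a strictly increasing sequence
⟨κ_n⟩ of regular cardinals cofinal in κ, then there is a sequence
⟨f_α : α < κ⁺⟩ in ∏_{n<ω}(κ_{n+1} \ κ_n) that is strictly increasing modulo
finite. -/
theorem stmt1 (κ : Cardinal.{u}) (hκω : κ.ord.cof = ℵ₀)
    (κs : ℕ → Cardinal.{u}) (hmono : StrictMono κs)
    (hreg : ∀ n, (κs n).IsRegular) (hcof : (⨆ n, κs n) = κ) :
    ∃ f : Ordinal.{u} → ℕ → Ordinal.{u},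
      (∀ α < (Order.succ κ).ord, ∀ n,
          (κs n).ord ≤ f α n ∧ f α n < (κs (n + 1)).ord) ∧
      (∀ α β, α < β → β < (Order.succ κ).ord →
          ∀ᶠ n in Filter.atTop, f α n < f β n) :=
  stmt1_general κ κs hmono hreg hcof
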